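/- Let f : [0,1]^k → [0,1]^k be a (1-γ)-contraction under ℓ₁ with fixed point x*, and x ∈ [0,1]^k with ‖f(x)-x‖₁ > ε, Σ_{j=3}^{k}|f(x)_j - x_j| ≤ εγ/4, |f(x)_1 - x_1| ≥ |f(x)_2 - x_2|, f(x)_1 > x_1, and x*_1 ≤ x_1 + εγ/8. Then ‖x - x*‖₁ - ‖f(x) - x*‖₁ ≤ εγ/2. -/

import Mathlib

/-!
Moving from `x` to `f x` can shrink the `ℓ₁` distance to `x*` by at most `|f(x)_j - x_j|` in
each coordinate, so the coordinates `j ≥ 2` contribute at most `εγ/4`. Since the first two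
coordinates carry almost all of the move `‖f(x) - x‖₁ > ε`, the step `f(x)_0 - x_0` exceeds
`εγ/8`, so `f(x)_0` lies beyond `x*_0`: the gain in coordinate `0` is then `εγ/4` minus the
full step, which pays for whatever coordinate `1` gains.
-/

open Finset

section OrderedGroup

variable {G : Type*} [AddCommGroup G] [LinearOrder G] [IsOrderedAddMonoid G]

theorem abs_sub_sub_abs_sub_le (a b c : G) : |a - c| - |b - c| ≤ |b - a| := by
  have h := abs_sub_le a b c
  rw [abs_sub_comm a b] at h
  exact sub_le_iff_le_add.2 h

theorem sum_abs_sub_sub_sum_abs_sub_le {ι : Type*} (s : Finset ι) (x y z : ι → G) :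
    ∑ i ∈ s, |x i - z i| - ∑ i ∈ s, |y i - z i| ≤ ∑ i ∈ s, |y i - x i| := by
  rw [← sum_sub_distrib]
  exact sum_le_sum fun i _ => abs_sub_sub_abs_sub_le (x i) (y i) (z i)

end OrderedGroup

theorem abs_sub_add_abs_sub_sub_le {K : Type*} [Field K] [LinearOrder K] [IsStrictOrderedRing K]
    {a₀ b₀ c₀ a₁ b₁ c₁ δ : K} (hδ : 0 ≤ δ) (hstep : |b₁ - a₁| ≤ b₀ - a₀) (hc₀b : c₀ ≤ b₀)
    (hc₀a : c₀ ≤ a₀ + δ) :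
    |a₀ - c₀| + |a₁ - c₁| - (|b₀ - c₀| + |b₁ - c₁|) ≤ 2 * δ := by
  have h₀ : |a₀ - c₀| ≤ a₀ - c₀ + 2 * δ := abs_sub_le_iff.2 ⟨by linarith, by linarith⟩
  have h₁ := abs_sub_sub_abs_sub_le a₁ b₁ c₁
  rw [abs_of_nonneg (sub_nonneg.2 hc₀b)]
  linarith

theorem Fin.sum_univ_eq_add_add_sum_filter_two_le {M : Type*} [AddCommMonoid M] {k : ℕ}
    (g : Fin (k + 2) → M) :
    ∑ i, g i = g 0 + g 1 + ∑ j ∈ univ.filter (fun j : Fin (k + 2) => 2 ≤ (j : ℕ)), g j := by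
  have hhead : univ.filter (fun j : Fin (k + 2) => ¬ 2 ≤ (j : ℕ)) = {0, 1} := by
    ext j
    simp only [mem_filter, mem_univ, true_and, mem_insert, mem_singleton, Fin.ext_iff,
      Fin.val_zero, Fin.val_one]
    omega
  rw [← sum_filter_add_sum_filter_not univ (fun j : Fin (k + 2) => 2 ≤ (j : ℕ)), hhead,
    sum_pair (by simp), add_comm]

theorem key_inequality_lemma42_general
    (k : ℕ) (γ ε : ℝ) (hγ1 : γ < 1) (hε : 0 < ε)
    (f : (Fin (k + 2) → ℝ) → (Fin (k + 2) → ℝ))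
    (xstar : Fin (k + 2) → ℝ)
    (x : Fin (k + 2) → ℝ)
    (hfar : ∑ i, |f x i - x i| > ε)
    (htail : ∑ j ∈ Finset.univ.filter (fun j : Fin (k + 2) => 2 ≤ (j : ℕ)), |f x j - x j| ≤ ε * γ / 4)
    (hdom : |f x 0 - x 0| ≥ |f x 1 - x 1|)
    (hup : f x 0 > x 0)
    (hassume : xstar 0 ≤ x 0 + ε * γ / 8) :
    (∑ i, |x i - xstar i|) - ∑ i, |f x i - xstar i| ≤ ε * γ / 2 := by
  have hεγ : 0 ≤ ε * γ / 4 := (sum_nonneg fun j _ => abs_nonneg _).trans htail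
  have hstep : |f x 1 - x 1| ≤ f x 0 - x 0 := hdom.trans_eq (abs_of_pos (sub_pos.2 hup))
  have hstep_large : ε * γ / 8 < f x 0 - x 0 := by
    have := mul_lt_of_lt_one_right hε hγ1
    rw [Fin.sum_univ_eq_add_add_sum_filter_two_le, abs_of_pos (sub_pos.2 hup)] at hfar
    linarith
  have hhead := abs_sub_add_abs_sub_sub_le (c₁ := xstar 1) (by linarith) hstep
    (by linarith) hassume
  have htail' := (sum_abs_sub_sub_sum_abs_sub_le _ x (f x) xstar).trans htail
  rw [Fin.sum_univ_eq_add_add_sum_filter_two_le, Fin.sum_univ_eq_add_add_sum_filter_two_le]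
  linarith

theorem key_inequality_lemma42
    (k : ℕ) (γ ε : ℝ) (hγ0 : 0 < γ) (hγ1 : γ < 1) (hε : 0 < ε)
    (f : (Fin (k + 2) → ℝ) → (Fin (k + 2) → ℝ))
    (hmap : ∀ x ∈ Set.Icc (0 : Fin (k + 2) → ℝ) 1, f x ∈ Set.Icc (0 : Fin (k + 2) → ℝ) 1)
    (hcontr : ∀ x ∈ Set.Icc (0 : Fin (k + 2) → ℝ) 1, ∀ y ∈ Set.Icc (0 : Fin (k + 2) → ℝ) 1,
      ∑ i, |f x i - f y i| ≤ (1 - γ) * ∑ i, |x i - y i|)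
    (xstar : Fin (k + 2) → ℝ) (hxstar : xstar ∈ Set.Icc (0 : Fin (k + 2) → ℝ) 1)
    (hfix : f xstar = xstar)
    (x : Fin (k + 2) → ℝ) (hx : x ∈ Set.Icc (0 : Fin (k + 2) → ℝ) 1)
    (hfar : ∑ i, |f x i - x i| > ε)
    (htail : ∑ j ∈ Finset.univ.filter (fun j : Fin (k + 2) => 2 ≤ (j : ℕ)), |f x j - x j| ≤ ε * γ / 4)
    (hdom : |f x 0 - x 0| ≥ |f x 1 - x 1|)
    (hup : f x 0 > x 0)
    (hassume : xstar 0 ≤ x 0 + ε * γ / 8) :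
    (∑ i, |x i - xstar i|) - ∑ i, |f x i - xstar i| ≤ ε * γ / 2 :=
  key_inequality_lemma42_general k γ ε hγ1 hε f xstar x hfar htail hdom hup hassume
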